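/- Let r, s, t, u be integers with ru − st = 1 or ru − st = −1 and with s ≠ 0, and let G(r,s,t,u) = ⟨x₁, y₁, x₂, y₂ ∣ x₁y₁x₁⁻¹y₁ = 1, x₂y₂x₂⁻¹y₂ = 1, x₁² = x₂^{2r} y₂^{t}, y₁ = x₂^{2s} y₂^{u}⟩. If k, l ∈ ℤ satisfy y₁^{2k} = y₂^{2l} in G(r,s,t,u), then k = 0 and l = 0. -/

import Mathlib

/-- The relators of the fundamental group of the orientable torus semi-bundle with
gluing matrix `((r, s), (t, u))`: with `x₁, y₁, x₂, y₂` the generators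
`FreeGroup.of 0, …, FreeGroup.of 3`, the relators are `x₁y₁x₁⁻¹y₁`, `x₂y₂x₂⁻¹y₂`,
`x₁² (x₂^{2r} y₂^{t})⁻¹` and `y₁ (x₂^{2s} y₂^{u})⁻¹`. -/
def semiBundleRels (r s t u : ℤ) : Set (FreeGroup (Fin 4)) :=
  {FreeGroup.of 0 * FreeGroup.of 1 * (FreeGroup.of 0)⁻¹ * FreeGroup.of 1,
   FreeGroup.of 2 * FreeGroup.of 3 * (FreeGroup.of 2)⁻¹ * FreeGroup.of 3,
   (FreeGroup.of 0) ^ 2 * ((FreeGroup.of 2) ^ (2 * r) * (FreeGroup.of 3) ^ t)⁻¹,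
   FreeGroup.of 1 * ((FreeGroup.of 2) ^ (2 * s) * (FreeGroup.of 3) ^ u)⁻¹}

/-- The fundamental group `G(r,s,t,u)` of the orientable torus semi-bundle with
gluing matrix `((r, s), (t, u))`. -/
abbrev SemiBundleGroup (r s t u : ℤ) : Type := PresentedGroup (semiBundleRels r s t u)

/-- The generator `x₁` of `G(r,s,t,u)`. -/
def sbX₁ (r s t u : ℤ) : SemiBundleGroup r s t u := PresentedGroup.of 0
/-- The generator `y₁` of `G(r,s,t,u)`. -/
def sbY₁ (r s t u : ℤ) : SemiBundleGroup r s t u := PresentedGroup.of 1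
/-- The generator `x₂` of `G(r,s,t,u)`. -/
def sbX₂ (r s t u : ℤ) : SemiBundleGroup r s t u := PresentedGroup.of 2
/-- The generator `y₂` of `G(r,s,t,u)`. -/
def sbY₂ (r s t u : ℤ) : SemiBundleGroup r s t u := PresentedGroup.of 3

/-!
`G(r,s,t,u)` acts on `ℤ²` by affine maps: `x₂` as the glide reflection `v ↦ (v₀ + 1, -v₁)`,
`y₂` as the translation by `(0, 2)`, and `x₁, y₁` as the conjugates of `x₂, y₂` by the gluing
matrix `!![r, s; t, u]`, which lies in `GL₂(ℤ)` because `ru - st = ±1`. Conjugation by it turns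
the translations `x₂²` and `y₂` by `(2, 0)` and `(0, 2)` into translations by `(2r, 2t)` and
`(2s, 2u)`, which is what the last two relations ask for. So `y₁` and `y₂` act by the translations
`(2s, 2u)` and `(0, 2)`, which are linearly independent when `s ≠ 0`.
-/

namespace AffineEquiv
variable {k V P : Type*} [Ring k] [AddCommGroup V] [Module k V] [AddTorsor V P]

theorem mul_constVAdd_mul_inv (e : P ≃ᵃ[k] P) (v : V) :
    e * constVAdd k P v * e⁻¹ = constVAdd k P (e.linear v) := by
  ext p
  simp [coe_mul, inv_def, map_vadd]

theorem constVAdd_mul_constVAdd (v w : V) :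
    constVAdd k P v * constVAdd k P w = constVAdd k P (v + w) :=
  (constVAdd_add k P v w).symm

variable (k) in
def glide (A : V ≃ₗ[k] V) (w : V) : V ≃ᵃ[k] V :=
  constVAdd k V w * A.toAffineEquiv

@[simp]
theorem glide_apply (A : V ≃ₗ[k] V) (w v : V) : glide k A w v = w + A v := rfl

@[simp]
theorem linear_glide (A : V ≃ₗ[k] V) (w : V) : (glide k A w).linear = A := rfl

theorem glide_sq {A : V ≃ₗ[k] V} (hA : ∀ v, A (A v) = v) {w : V} (hw : A w = w) :
    glide k A w ^ 2 = constVAdd k V (2 • w) := by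
  ext v
  simp [sq, hA, hw, two_nsmul]

theorem glide_mul_constVAdd_mul_inv_mul_constVAdd {A : V ≃ₗ[k] V} (w : V) {v : V}
    (hv : A v = -v) :
    glide k A w * constVAdd k V v * (glide k A w)⁻¹ * constVAdd k V v = 1 := by
  rw [mul_constVAdd_mul_inv, linear_glide, hv, constVAdd_mul_constVAdd, neg_add_cancel,
    constVAdd_zero]
  rfl

end AffineEquiv

namespace SemiBundleGroup
variable {r s t u : ℤ} {H : Type*} [Group H]

def liftConj (a b c : H) (hab : a * b * a⁻¹ * b = 1)
    (ha : c * a ^ 2 * c⁻¹ = a ^ (2 * r) * b ^ t) (hb : c * b * c⁻¹ = a ^ (2 * s) * b ^ u) :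
    SemiBundleGroup r s t u →* H :=
  PresentedGroup.toGroup (f := ![c * a * c⁻¹, c * b * c⁻¹, a, b]) <| by
    rintro w (rfl | rfl | rfl | rfl) <;>
      simp only [map_mul, map_inv, map_pow, map_zpow, FreeGroup.lift_apply_of, Matrix.cons_val,
        mul_inv_eq_one]
    · calc _ = c * (a * b * a⁻¹ * b) * c⁻¹ := by group
        _ = 1 := by rw [hab, mul_one, mul_inv_cancel]
    · exact hab
    · rw [conj_pow, ha]
    · exact hb

variable {a b c : H} {hab : a * b * a⁻¹ * b = 1} {ha : c * a ^ 2 * c⁻¹ = a ^ (2 * r) * b ^ t}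
  {hb : c * b * c⁻¹ = a ^ (2 * s) * b ^ u}

@[simp]
theorem liftConj_sbY₁ : liftConj a b c hab ha hb (sbY₁ r s t u) = c * b * c⁻¹ :=
  PresentedGroup.toGroup.of _

@[simp]
theorem liftConj_sbY₂ : liftConj a b c hab ha hb (sbY₂ r s t u) = b :=
  PresentedGroup.toGroup.of _

end SemiBundleGroup

open AffineEquiv

def reflectSnd : (Fin 2 → ℤ) ≃ₗ[ℤ] (Fin 2 → ℤ) :=
  LinearEquiv.piCongrRight ![LinearEquiv.refl ℤ ℤ, LinearEquiv.neg ℤ]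

@[simp]
theorem reflectSnd_apply (v : Fin 2 → ℤ) : reflectSnd v = ![v 0, -v 1] := by
  ext i; fin_cases i <;> rfl

namespace SemiBundleGroup

theorem exists_hom_affineEquiv {r s t u : ℤ}
    (hdet : r * u - s * t = 1 ∨ r * u - s * t = -1) :
    ∃ φ : SemiBundleGroup r s t u →* (Fin 2 → ℤ) ≃ᵃ[ℤ] (Fin 2 → ℤ),
      φ (sbY₁ r s t u) = constVAdd ℤ _ ![2 * s, 2 * u] ∧
      φ (sbY₂ r s t u) = constVAdd ℤ _ ![0, 2] := by
  have hP : IsUnit !![r, s; t, u].det := by rw [Matrix.det_fin_two_of, Int.isUnit_iff]; exact hdet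
  set c := (Matrix.toLinearEquiv' _ (Matrix.invertibleOfIsUnitDet _ hP)).toAffineEquiv
  set a := glide ℤ reflectSnd ![1, 0]
  set b := constVAdd ℤ (Fin 2 → ℤ) ![0, 2]
  have hconj (v : Fin 2 → ℤ) :
      c * constVAdd ℤ _ v * c⁻¹ = constVAdd ℤ _ (!![r, s; t, u].mulVec v) :=
    mul_constVAdd_mul_inv c v
  have hab : a * b * a⁻¹ * b = 1 :=
    glide_mul_constVAdd_mul_inv_mul_constVAdd _ (by ext i; fin_cases i <;> simp)
  have ha2 : a ^ 2 = constVAdd ℤ _ (2 • ![1, 0]) :=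
    glide_sq (fun v => by ext i; fin_cases i <;> simp) (by ext i; fin_cases i <;> simp)
  have ha2_zpow (n : ℤ) : a ^ (2 * n) = constVAdd ℤ _ (n • 2 • ![1, 0]) := by
    rw [zpow_mul, zpow_ofNat, ha2, constVAdd_zsmul]
  have ha : c * a ^ 2 * c⁻¹ = a ^ (2 * r) * b ^ t := by
    rw [ha2, hconj, ha2_zpow, ← constVAdd_zsmul, constVAdd_mul_constVAdd]
    congr 1
    ext i; fin_cases i <;> simp [mul_comm]
  have hb : c * b * c⁻¹ = a ^ (2 * s) * b ^ u := by
    rw [hconj, ha2_zpow, ← constVAdd_zsmul, constVAdd_mul_constVAdd]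
    congr 1
    ext i; fin_cases i <;> simp [mul_comm]
  refine ⟨liftConj a b c hab ha hb, ?_, rfl⟩
  rw [liftConj_sbY₁, hconj]
  congr 1
  ext i; fin_cases i <;> simp

theorem sbY₁_zpow_eq_sbY₂_zpow_iff {r s t u : ℤ}
    (hdet : r * u - s * t = 1 ∨ r * u - s * t = -1) (hs : s ≠ 0) {m n : ℤ} :
    sbY₁ r s t u ^ m = sbY₂ r s t u ^ n ↔ m = 0 ∧ n = 0 := by
  refine ⟨fun h => ?_, fun ⟨hm, hn⟩ => by rw [hm, hn, zpow_zero, zpow_zero]⟩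
  obtain ⟨φ, hy₁, hy₂⟩ := exists_hom_affineEquiv hdet
  have h' := congrArg (fun g => φ g 0) h
  simp only [map_zpow, hy₁, hy₂, ← constVAdd_zsmul, constVAdd_apply, vadd_eq_add,
    add_zero] at h'
  have h₀ : m * (2 * s) = n * 0 := congrFun h' 0
  have h₁ : m * (2 * u) = n * 2 := congrFun h' 1
  obtain rfl : m = 0 := by simpa [hs] using h₀
  exact ⟨rfl, by simpa using h₁.symm⟩

end SemiBundleGroup

/-- If `s ≠ 0` (so the torus semi-bundle carries a Sol structure), then
`y₁^{2k} = y₂^{2l}` in `G(r,s,t,u)` forces `k = 0` and `l = 0`. -/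
theorem semiBundle_y_powers (r s t u : ℤ)
    (hdet : r * u - s * t = 1 ∨ r * u - s * t = -1) (hs : s ≠ 0)
    (k l : ℤ) (h : sbY₁ r s t u ^ (2 * k) = sbY₂ r s t u ^ (2 * l)) :
    k = 0 ∧ l = 0 := by
  have := (SemiBundleGroup.sbY₁_zpow_eq_sbY₂_zpow_iff hdet hs).mp h
  omega
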